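/- Main Theorem (one-step contraction): Under the setup (unit-norm rows, Ax = b_t, ‖b - b_t‖_{ℓ⁰} ≤ βm, 0 < β < q < 1 - β), if (q/(q-β))·(2√β/√(1-q-β) + β/(1-q-β)) < σ_{q-β,min}(A)²/σ_max(A)², then for the q-quantile random Kaczmarz iteration the expected squared error satisfies E‖x_{k+1} - x‖² ≤ (1 - c)·‖x_k - x‖² where c = (q-β)·σ_{q-β,min}(A)²/(q²m) - (σ_max(A)²/(qm))·(2√β/√(1-q-β) + β/(1-q-β)) > 0. -/

import Mathlib

/-! Split the quantile set `B` into the uncorrupted rows `B \ C` and the corrupted rows `B ∩ C`.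
On an uncorrupted row the step is an exact projection and lowers the squared error by
`⟪a i, xk - x⟫ ^ 2`; as `B \ C` has at least `(q - β) m` rows, these gains add up to at least
`σ_{q-β,min} ^ 2 ‖xk - x‖ ^ 2`. On a corrupted row the residual is still at most the quantile `Q`,
so the error grows by at most `Q ^ 2 + 2 Q |⟪a i, xk - x⟫|`. The quantile itself is controlled by
the at least `(1 - q - β) m` uncorrupted rows outside `B`: their residuals `⟪a i, xk - x⟫` all
exceed `Q`, whence `Q ^ 2 (1 - q - β) m ≤ σ_max ^ 2 ‖xk - x‖ ^ 2`. Cauchy–Schwarz over the at most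
`β m` corrupted rows bounds `∑ |⟪a i, xk - x⟫|` by `√(β m) σ_max ‖xk - x‖`. -/

open RealInnerProductSpace Finset

/-- The largest singular value of the matrix with rows `a i`. -/
noncomputable def sigmaMax {m n : ℕ} (a : Fin m → EuclideanSpace ℝ (Fin n)) : ℝ :=
  sSup {t : ℝ | ∃ y : EuclideanSpace ℝ (Fin n), ‖y‖ = 1 ∧
    t = Real.sqrt (∑ i, ⟪a i, y⟫ ^ 2)}

/-- `σ_{r,min}`: the minimum over all row-subsets of cardinality `k` of the smallest
singular value of the corresponding row-submatrix. -/
noncomputable def sigmaRMin {m n : ℕ} (a : Fin m → EuclideanSpace ℝ (Fin n))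
    (k : ℕ) : ℝ :=
  sInf {t : ℝ | ∃ S : Finset (Fin m), S.card = k ∧
    ∃ y : EuclideanSpace ℝ (Fin n), ‖y‖ = 1 ∧
      t = Real.sqrt (∑ i ∈ S, ⟪a i, y⟫ ^ 2)}

section SingularValues

variable {m n : ℕ} (a : Fin m → EuclideanSpace ℝ (Fin n))

lemma sum_inner_sq_eq_norm_sq_mul (T : Finset (Fin m)) {y : EuclideanSpace ℝ (Fin n)}
    (hy : y ≠ 0) :
    ∑ i ∈ T, ⟪a i, y⟫ ^ 2 = ‖y‖ ^ 2 * ∑ i ∈ T, ⟪a i, ‖y‖⁻¹ • y⟫ ^ 2 := by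
  rw [mul_sum]
  refine sum_congr rfl fun i _ => ?_
  rw [real_inner_smul_right]
  field_simp

lemma sum_inner_sq_le_sigmaMax_sq {u : EuclideanSpace ℝ (Fin n)} (hu : ‖u‖ = 1) :
    ∑ i, ⟪a i, u⟫ ^ 2 ≤ sigmaMax a ^ 2 := by
  have hbdd : BddAbove {t : ℝ | ∃ y : EuclideanSpace ℝ (Fin n), ‖y‖ = 1 ∧
      t = √(∑ i, ⟪a i, y⟫ ^ 2)} := by
    refine ⟨√(∑ i, ‖a i‖ ^ 2), ?_⟩
    rintro t ⟨y, hy, rfl⟩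
    refine Real.sqrt_le_sqrt (sum_le_sum fun i _ => ?_)
    have h := abs_real_inner_le_norm (a i) y
    rw [hy, mul_one] at h
    exact sq_le_sq.2 (h.trans (le_abs_self _))
  calc ∑ i, ⟪a i, u⟫ ^ 2 = √(∑ i, ⟪a i, u⟫ ^ 2) ^ 2 := (Real.sq_sqrt (by positivity)).symm
    _ ≤ sigmaMax a ^ 2 := by gcongr; exact le_csSup hbdd ⟨u, hu, rfl⟩

lemma sum_inner_sq_le_sigmaMax_sq_mul (T : Finset (Fin m)) (y : EuclideanSpace ℝ (Fin n)) :
    ∑ i ∈ T, ⟪a i, y⟫ ^ 2 ≤ sigmaMax a ^ 2 * ‖y‖ ^ 2 := by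
  rcases eq_or_ne y 0 with rfl | hy
  · simp
  calc ∑ i ∈ T, ⟪a i, y⟫ ^ 2 ≤ ∑ i, ⟪a i, y⟫ ^ 2 :=
        sum_le_sum_of_subset_of_nonneg (subset_univ T) fun _ _ _ => sq_nonneg _
    _ = ‖y‖ ^ 2 * ∑ i, ⟪a i, ‖y‖⁻¹ • y⟫ ^ 2 := sum_inner_sq_eq_norm_sq_mul a _ hy
    _ ≤ ‖y‖ ^ 2 * sigmaMax a ^ 2 := by
        gcongr; exact sum_inner_sq_le_sigmaMax_sq a (norm_smul_inv_norm hy)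
    _ = sigmaMax a ^ 2 * ‖y‖ ^ 2 := mul_comm _ _

lemma sigmaRMin_nonneg (k : ℕ) : 0 ≤ sigmaRMin a k :=
  Real.sInf_nonneg (by rintro t ⟨S, -, y, -, rfl⟩; exact Real.sqrt_nonneg _)

lemma sigmaRMin_card_sq_le_sum_inner_sq (S : Finset (Fin m)) {u : EuclideanSpace ℝ (Fin n)}
    (hu : ‖u‖ = 1) : sigmaRMin a S.card ^ 2 ≤ ∑ i ∈ S, ⟪a i, u⟫ ^ 2 := by
  have hbdd : BddBelow {t : ℝ | ∃ S' : Finset (Fin m), S'.card = S.card ∧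
      ∃ y : EuclideanSpace ℝ (Fin n), ‖y‖ = 1 ∧ t = √(∑ i ∈ S', ⟪a i, y⟫ ^ 2)} :=
    ⟨0, by rintro t ⟨S', -, y, -, rfl⟩; exact Real.sqrt_nonneg _⟩
  calc sigmaRMin a S.card ^ 2 ≤ √(∑ i ∈ S, ⟪a i, u⟫ ^ 2) ^ 2 := by
        gcongr
        · exact sigmaRMin_nonneg a _
        · exact csInf_le hbdd ⟨S, rfl, u, hu, rfl⟩
    _ = ∑ i ∈ S, ⟪a i, u⟫ ^ 2 := Real.sq_sqrt (by positivity)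

lemma sigmaRMin_sq_mul_le_sum_inner_sq {k : ℕ} {S : Finset (Fin m)} (hk : k ≤ S.card)
    (y : EuclideanSpace ℝ (Fin n)) :
    sigmaRMin a k ^ 2 * ‖y‖ ^ 2 ≤ ∑ i ∈ S, ⟪a i, y⟫ ^ 2 := by
  obtain ⟨S', hS'S, rfl⟩ := exists_subset_card_eq hk
  rcases eq_or_ne y 0 with rfl | hy
  · simp
  calc sigmaRMin a S'.card ^ 2 * ‖y‖ ^ 2
        ≤ (∑ i ∈ S', ⟪a i, ‖y‖⁻¹ • y⟫ ^ 2) * ‖y‖ ^ 2 := by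
        gcongr; exact sigmaRMin_card_sq_le_sum_inner_sq a S' (norm_smul_inv_norm hy)
    _ = ∑ i ∈ S', ⟪a i, y⟫ ^ 2 := by rw [mul_comm, ← sum_inner_sq_eq_norm_sq_mul a _ hy]
    _ ≤ ∑ i ∈ S, ⟪a i, y⟫ ^ 2 :=
        sum_le_sum_of_subset_of_nonneg hS'S fun _ _ _ => sq_nonneg _

end SingularValues

section KaczmarzStep

variable {E : Type*} [NormedAddCommGroup E] [InnerProductSpace ℝ E] {a : E}

lemma norm_kaczmarz_step_sub_sq (ha : ‖a‖ = 1) (x y : E) (c : ℝ) :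
    ‖y + (c - ⟪a, y⟫) • a - x‖ ^ 2 =
      ‖y - x‖ ^ 2 - 2 * (⟪a, y⟫ - c) * ⟪a, y - x⟫ + (⟪a, y⟫ - c) ^ 2 := by
  have hstep : y + (c - ⟪a, y⟫) • a - x = (y - x) - (⟪a, y⟫ - c) • a := by module
  rw [hstep, norm_sub_sq_real, real_inner_smul_right, norm_smul, ha, real_inner_comm a (y - x),
    Real.norm_eq_abs, mul_one, sq_abs]
  ring

lemma norm_kaczmarz_step_sub_sq_of_inner_eq (ha : ‖a‖ = 1) {x : E} {c : ℝ} (hx : ⟪a, x⟫ = c)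
    (y : E) : ‖y + (c - ⟪a, y⟫) • a - x‖ ^ 2 = ‖y - x‖ ^ 2 - ⟪a, y - x⟫ ^ 2 := by
  rw [norm_kaczmarz_step_sub_sq ha, ← hx, inner_sub_right]
  ring

lemma norm_kaczmarz_step_sub_sq_le (ha : ‖a‖ = 1) (x y : E) {c Q : ℝ}
    (hQ : |⟪a, y⟫ - c| ≤ Q) :
    ‖y + (c - ⟪a, y⟫) • a - x‖ ^ 2 ≤ ‖y - x‖ ^ 2 + Q ^ 2 + 2 * Q * |⟪a, y - x⟫| := by
  rw [norm_kaczmarz_step_sub_sq ha]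
  have hr : (⟪a, y⟫ - c) ^ 2 ≤ Q ^ 2 := sq_le_sq' (abs_le.1 hQ).1 (abs_le.1 hQ).2
  have hrs : -((⟪a, y⟫ - c) * ⟪a, y - x⟫) ≤ Q * |⟪a, y - x⟫| :=
    (neg_le_abs _).trans (by rw [abs_mul]; gcongr)
  linarith

end KaczmarzStep

section Cards

variable {α : Type*} [DecidableEq α] (s t : Finset α)

lemma card_sub_card_le_card_sdiff : (s.card : ℝ) - t.card ≤ (s \ t).card := by
  have h : (s.card : ℝ) ≤ (s \ t).card + t.card := by exact_mod_cast card_le_card_sdiff_add_card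
  linarith

lemma card_sub_card_sub_card_le_card_compl_union [Fintype α] :
    (Fintype.card α : ℝ) - s.card - t.card ≤ (s ∪ t)ᶜ.card := by
  have hcompl : ((s ∪ t)ᶜ.card : ℝ) + (s ∪ t).card = Fintype.card α := by
    exact_mod_cast card_compl_add_card (s ∪ t)
  have hunion : ((s ∪ t).card : ℝ) ≤ s.card + t.card := by exact_mod_cast card_union_le s t
  linarith

end Cards

lemma corruption_excess_le {m β μ c Q t W : ℝ} (hm : 0 < m) (hβ : 0 ≤ β) (hμ : 0 < μ)
    (hc : c ≤ β * m) (hQW : Q ^ 2 * (μ * m) ≤ W) (htW : t ^ 2 ≤ β * m * W) :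
    c * Q ^ 2 + 2 * Q * t ≤ W * (2 * √β / √μ + β / μ) := by
  have hW : 0 ≤ W := le_trans (by positivity) hQW
  have hQ2 : Q ^ 2 ≤ W / (μ * m) := (le_div_iff₀ (by positivity)).2 hQW
  have hcQ : c * Q ^ 2 ≤ W * (β / μ) :=
    calc c * Q ^ 2 ≤ β * m * (W / (μ * m)) := by gcongr
      _ = W * (β / μ) := by field_simp
  have hQt : Q * t ≤ W * (√β / √μ) := by
    have hsq : (Q * t) ^ 2 ≤ W ^ 2 * (β / μ) :=
      calc (Q * t) ^ 2 = Q ^ 2 * t ^ 2 := mul_pow _ _ _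
        _ ≤ W / (μ * m) * (β * m * W) := by gcongr
        _ = W ^ 2 * (β / μ) := by field_simp
    calc Q * t ≤ √(W ^ 2 * (β / μ)) := Real.le_sqrt_of_sq_le hsq
      _ = W * (√β / √μ) := by
        rw [Real.sqrt_mul (sq_nonneg W), Real.sqrt_sq hW, Real.sqrt_div' _ hμ.le]
  calc c * Q ^ 2 + 2 * Q * t ≤ W * (β / μ) + 2 * (W * (√β / √μ)) := by linarith
    _ = W * (2 * √β / √μ + β / μ) := by ring

section QuantileKaczmarz

variable {m n : ℕ} {a : Fin m → EuclideanSpace ℝ (Fin n)} {x xk : EuclideanSpace ℝ (Fin n)}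
  {b : Fin m → ℝ} {B C : Finset (Fin m)} {Q : ℝ}

lemma sum_norm_kaczmarz_step_sub_sq_sdiff_le (ha : ∀ i, ‖a i‖ = 1)
    (hx : ∀ i ∉ C, ⟪a i, x⟫ = b i) {k : ℕ} (hk : k ≤ (B \ C).card) :
    ∑ i ∈ B \ C, ‖xk + (b i - ⟪a i, xk⟫) • a i - x‖ ^ 2 ≤
      ((B \ C).card - sigmaRMin a k ^ 2) * ‖xk - x‖ ^ 2 := by
  rw [sum_congr rfl fun i hi =>
    norm_kaczmarz_step_sub_sq_of_inner_eq (ha i) (hx i (mem_sdiff.1 hi).2) xk,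
    sum_sub_distrib, sum_const, nsmul_eq_mul, sub_mul]
  linarith [sigmaRMin_sq_mul_le_sum_inner_sq a hk (xk - x)]

lemma sum_norm_kaczmarz_step_sub_sq_inter_le (ha : ∀ i, ‖a i‖ = 1)
    (hB : ∀ i ∈ B, |⟪a i, xk⟫ - b i| ≤ Q) :
    ∑ i ∈ B ∩ C, ‖xk + (b i - ⟪a i, xk⟫) • a i - x‖ ^ 2 ≤
      (B ∩ C).card * ‖xk - x‖ ^ 2 +
        ((B ∩ C).card * Q ^ 2 + 2 * Q * ∑ i ∈ B ∩ C, |⟪a i, xk - x⟫|) := by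
  calc ∑ i ∈ B ∩ C, ‖xk + (b i - ⟪a i, xk⟫) • a i - x‖ ^ 2
      ≤ ∑ i ∈ B ∩ C, (‖xk - x‖ ^ 2 + Q ^ 2 + 2 * Q * |⟪a i, xk - x⟫|) :=
        sum_le_sum fun i hi => norm_kaczmarz_step_sub_sq_le (ha i) x xk (hB i (mem_inter.1 hi).1)
    _ = _ := by
        rw [sum_add_distrib, sum_add_distrib, sum_const, sum_const, nsmul_eq_mul, nsmul_eq_mul,
          mul_sum]
        ring

lemma sq_mul_card_compl_union_le (hx : ∀ i ∉ C, ⟪a i, x⟫ = b i)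
    (hB : ∀ i, |⟪a i, xk⟫ - b i| ≤ Q → i ∈ B) (hQ : 0 ≤ Q) :
    Q ^ 2 * (B ∪ C)ᶜ.card ≤ sigmaMax a ^ 2 * ‖xk - x‖ ^ 2 := by
  calc Q ^ 2 * (B ∪ C)ᶜ.card = ∑ _i ∈ (B ∪ C)ᶜ, Q ^ 2 := by
        rw [sum_const, nsmul_eq_mul, mul_comm]
    _ ≤ ∑ i ∈ (B ∪ C)ᶜ, ⟪a i, xk - x⟫ ^ 2 := sum_le_sum fun i hi => by
        simp only [compl_union, mem_inter, mem_compl] at hi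
        have hlt : Q < |⟪a i, xk - x⟫| := by
          rw [inner_sub_right, hx i hi.2]
          exact lt_of_not_ge (mt (hB i) hi.1)
        simpa using pow_le_pow_left₀ hQ hlt.le 2
    _ ≤ sigmaMax a ^ 2 * ‖xk - x‖ ^ 2 := sum_inner_sq_le_sigmaMax_sq_mul a _ _

lemma sq_sum_abs_inner_le (T : Finset (Fin m)) (y : EuclideanSpace ℝ (Fin n)) :
    (∑ i ∈ T, |⟪a i, y⟫|) ^ 2 ≤ T.card * (sigmaMax a ^ 2 * ‖y‖ ^ 2) :=
  calc (∑ i ∈ T, |⟪a i, y⟫|) ^ 2 ≤ T.card * ∑ i ∈ T, |⟪a i, y⟫| ^ 2 := sq_sum_le_card_mul_sum_sq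
    _ ≤ T.card * (sigmaMax a ^ 2 * ‖y‖ ^ 2) := by
        simp only [sq_abs]; gcongr; exact sum_inner_sq_le_sigmaMax_sq_mul a T y

lemma sum_norm_kaczmarz_step_sub_sq_le {q β : ℝ} (hm : 0 < m) (ha : ∀ i, ‖a i‖ = 1)
    (hx : ∀ i ∉ C, ⟪a i, x⟫ = b i) (hB : ∀ i, i ∈ B ↔ |⟪a i, xk⟫ - b i| ≤ Q) (hQ : 0 ≤ Q)
    (hBcard : (B.card : ℝ) = q * m) (hC : (C.card : ℝ) ≤ β * m) (hβ : 0 ≤ β)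
    (hμ : 0 < 1 - q - β) :
    ∑ i ∈ B, ‖xk + (b i - ⟪a i, xk⟫) • a i - x‖ ^ 2 ≤
      (q * m - sigmaRMin a ⌈(q - β) * m⌉₊ ^ 2) * ‖xk - x‖ ^ 2 +
        sigmaMax a ^ 2 * ‖xk - x‖ ^ 2 * (2 * √β / √(1 - q - β) + β / (1 - q - β)) := by
  have hmR : (0 : ℝ) < m := Nat.cast_pos.2 hm
  have hgood : ⌈(q - β) * m⌉₊ ≤ (B \ C).card :=
    Nat.ceil_le.2 (by linarith [card_sub_card_le_card_sdiff B C])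
  have hout : (1 - q - β) * m ≤ (B ∪ C)ᶜ.card := by
    have := card_sub_card_sub_card_le_card_compl_union B C
    rw [Fintype.card_fin] at this
    linarith
  have hbad : ((B ∩ C).card : ℝ) ≤ β * m :=
    (Nat.cast_le.2 (card_le_card inter_subset_right)).trans hC
  have hexcess := corruption_excess_le hmR hβ hμ hbad
    ((mul_le_mul_of_nonneg_left hout (sq_nonneg Q)).trans
      (sq_mul_card_compl_union_le hx (fun i => (hB i).2) hQ))
    ((sq_sum_abs_inner_le (B ∩ C) (xk - x)).trans (by gcongr))
  have hcards : ((B \ C).card + (B ∩ C).card : ℝ) * ‖xk - x‖ ^ 2 = q * m * ‖xk - x‖ ^ 2 := by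
    rw [← hBcard, ← Nat.cast_add, card_sdiff_add_card_inter]
  rw [← sum_inter_add_sum_sdiff B C]
  linarith [sum_norm_kaczmarz_step_sub_sq_sdiff_le (xk := xk) ha hx hgood,
    sum_norm_kaczmarz_step_sub_sq_inter_le (x := x) (C := C) ha fun i hi => (hB i).1 hi]

end QuantileKaczmarz

lemma contraction_rate_pos {m q β σ S E : ℝ} (hm : 0 < m) (hq : 0 < q) (hβq : β < q)
    (hE : 0 ≤ E) (hS : 0 ≤ S) (h : q / (q - β) * E < σ / S) :
    0 < (q - β) * σ / (q ^ 2 * m) - S / (q * m) * E := by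
  have hqβ : 0 < q - β := sub_pos.2 hβq
  have hS' : 0 < S := hS.lt_of_ne <| by
    rintro rfl
    rw [div_zero] at h
    exact h.not_ge (by positivity)
  rw [div_mul_eq_mul_div, div_lt_div_iff₀ hqβ hS'] at h
  have hrate : (q - β) * σ / (q ^ 2 * m) - S / (q * m) * E =
      ((q - β) * σ - q * E * S) / (q ^ 2 * m) := by
    field_simp
  rw [hrate]
  exact div_pos (by linarith) (by positivity)

lemma mul_le_one_sub_rate_mul {m q β σ S E N X : ℝ} (hm : 0 < m) (hq : 0 < q) (hβ : 0 ≤ β)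
    (hσ : 0 ≤ σ) (hN : 0 ≤ N) (hX : X ≤ (q * m - σ) * N + S * N * E) :
    1 / (q * m) * X ≤ (1 - ((q - β) * σ / (q ^ 2 * m) - S / (q * m) * E)) * N := by
  have hgap : (1 - ((q - β) * σ / (q ^ 2 * m) - S / (q * m) * E)) * N -
      1 / (q * m) * ((q * m - σ) * N + S * N * E) = β * σ * N / (q ^ 2 * m) := by
    field_simp
    ring
  have hXle : 1 / (q * m) * X ≤ 1 / (q * m) * ((q * m - σ) * N + S * N * E) := by
    gcongr
  have : 0 ≤ β * σ * N / (q ^ 2 * m) := by positivity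
  linarith

/-- Main Theorem, one-step contraction: under the corruption
condition, one step of the `q`-quantile random Kaczmarz method (uniform choice of
an equation in the quantile set `B`) contracts the expected squared error. -/
theorem main_theorem_one_step {m n : ℕ} (a : Fin m → EuclideanSpace ℝ (Fin n))
    (x xk : EuclideanSpace ℝ (Fin n)) (bt b : Fin m → ℝ) (q β Q : ℝ)
    (C : Finset (Fin m))
    (hm : 0 < m)
    (ha : ∀ i, ‖a i‖ = 1)
    (hbt : ∀ i, ⟪a i, x⟫ = bt i)
    (hb : ∀ i ∉ C, b i = bt i)
    (hC : (C.card : ℝ) ≤ β * m)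
    (hβ : 0 < β) (hβq : β < q) (hq : q < 1 - β)
    (B : Finset (Fin m))
    (hBdef : B = univ.filter fun i => |⟪a i, xk⟫ - b i| ≤ Q)
    (hBcard : (B.card : ℝ) = q * m)
    (hcond : q / (q - β) * (2 * Real.sqrt β / Real.sqrt (1 - q - β) +
        β / (1 - q - β)) <
      sigmaRMin a ⌈(q - β) * m⌉₊ ^ 2 / sigmaMax a ^ 2) :
    0 < (q - β) * sigmaRMin a ⌈(q - β) * m⌉₊ ^ 2 / (q ^ 2 * m) -
        sigmaMax a ^ 2 / (q * m) *
          (2 * Real.sqrt β / Real.sqrt (1 - q - β) + β / (1 - q - β)) ∧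
      (1 / B.card : ℝ) * ∑ i ∈ B, ‖xk + (b i - ⟪a i, xk⟫) • a i - x‖ ^ 2 ≤
        (1 - ((q - β) * sigmaRMin a ⌈(q - β) * m⌉₊ ^ 2 / (q ^ 2 * m) -
          sigmaMax a ^ 2 / (q * m) *
            (2 * Real.sqrt β / Real.sqrt (1 - q - β) + β / (1 - q - β)))) *
          ‖xk - x‖ ^ 2 := by
  have hmR : (0 : ℝ) < m := Nat.cast_pos.2 hm
  have hq0 : 0 < q := hβ.trans hβq
  have hx : ∀ i ∉ C, ⟪a i, x⟫ = b i := fun i hi => (hbt i).trans (hb i hi).symm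
  have hmemB : ∀ i, i ∈ B ↔ |⟪a i, xk⟫ - b i| ≤ Q := fun i => by simp [hBdef]
  have hQ : 0 ≤ Q := by
    obtain ⟨i, hi⟩ := card_pos.1 (by exact_mod_cast hBcard ▸ mul_pos hq0 hmR : 0 < B.card)
    exact (abs_nonneg _).trans ((hmemB i).1 hi)
  have hμ : 0 < 1 - q - β := by linarith
  have hE : 0 ≤ 2 * √β / √(1 - q - β) + β / (1 - q - β) :=
    add_nonneg (by positivity) (div_nonneg hβ.le hμ.le)
  refine ⟨contraction_rate_pos hmR hq0 hβq hE (sq_nonneg _) hcond, ?_⟩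
  rw [hBcard]
  exact mul_le_one_sub_rate_mul hmR hq0 hβ.le (sq_nonneg _) (sq_nonneg _)
    (sum_norm_kaczmarz_step_sub_sq_le hm ha hx hmemB hQ hBcard hC hβ.le hμ)
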